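/- Let X = (x, θ)ᵗ satisfy xθ = −pθx, θ² = 0 and Y = (φ, y)ᵗ satisfy φ² = 0, φy = q⁻¹yφ, with x,θ,φ,y in a common algebra where the two pairs commute elementwise. Then the relations on X are equivalent to the eigenvalue equation R̂(X⊗X) = −q(X⊗X) and the relations on Y are equivalent to R̂(Y⊗Y) = p⁻¹(Y⊗Y), where R̂ is the 4×4 matrix with rows (−q,0,0,0), (0,p⁻¹−q,1,0), (0,qp⁻¹,0,0), (0,0,0,p⁻¹). -/
import Mathlib


open Matrix

/-- The nonstandard R̂ matrix over a field `K`, indexed by `Fin 2 × Fin 2`. -/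
noncomputable def Rhat (K : Type*) [Field K] (p q : K) :
    Matrix (Fin 2 × Fin 2) (Fin 2 × Fin 2) K :=
  Matrix.of fun a b =>
    (!![-q, 0, 0, 0;
        0, p⁻¹ - q, 1, 0;
        0, q * p⁻¹, 0, 0;
        0, 0, 0, p⁻¹])
      ⟨2 * a.1.val + a.2.val, by have := a.1.isLt; have := a.2.isLt; omega⟩
      ⟨2 * b.1.val + b.2.val, by have := b.1.isLt; have := b.2.isLt; omega⟩

private lemma smul_cancel_aux {K A : Type*} [Field K] [AddCommMonoid A] [Module K A]
    {c : K} (hc : c ≠ 0) {a b : A} (h : c • a = c • b) : a = b := by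
  have := congrArg (fun t => c⁻¹ • t) h
  simpa [smul_smul, inv_mul_cancel₀ hc] using this

/-- The quantum-plane relations are equivalent to the eigenvalue equations for R̂. -/
theorem plane_relations_iff_eigen
    {K A : Type*} [Field K] [Ring A] [Algebra K A]
    (p q : K) (hp : p ≠ 0) (hq : q ≠ 0) (hpq : p * q + 1 ≠ 0)
    (x θ φ y : A)
    (cxφ : x * φ = φ * x) (cxy : x * y = y * x)
    (cθφ : θ * φ = φ * θ) (cθy : θ * y = y * θ) :
    (((Rhat K p q).map (algebraMap K A)).mulVec
          (fun i : Fin 2 × Fin 2 => (![x, θ]) i.1 * (![x, θ]) i.2)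
        = (-q) • (fun i : Fin 2 × Fin 2 => (![x, θ]) i.1 * (![x, θ]) i.2)
      ↔ (x * θ = (-p) • (θ * x) ∧ θ * θ = 0)) ∧
    (((Rhat K p q).map (algebraMap K A)).mulVec
          (fun i : Fin 2 × Fin 2 => (![φ, y]) i.1 * (![φ, y]) i.2)
        = p⁻¹ • (fun i : Fin 2 × Fin 2 => (![φ, y]) i.1 * (![φ, y]) i.2)
      ↔ (φ * φ = 0 ∧ φ * y = q⁻¹ • (y * φ))) := by
  have hqp : p⁻¹ + q ≠ 0 := by
    have h1 : (1 : K) + p * q ≠ 0 := by rwa [add_comm] at hpq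
    have h2 : p⁻¹ * (1 + p * q) = p⁻¹ + q := by
      rw [mul_add, mul_one, inv_mul_cancel_left₀ hp]
    rw [← h2]
    exact mul_ne_zero (inv_ne_zero hp) h1
  have cqp : q * p⁻¹ ≠ 0 := mul_ne_zero hq (inv_ne_zero hp)
  constructor
  · simp only [funext_iff, Prod.forall, Fin.forall_fin_two]
    simp [Rhat, mulVec, dotProduct, Fintype.sum_prod_type, Fin.sum_univ_two,
      ← Algebra.smul_def]
    constructor
    · rintro ⟨h1, h2, h3⟩
      have hx : x * θ = -(p • (θ * x)) := by
        refine smul_cancel_aux cqp ?_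
        rw [h2, smul_neg, smul_smul]
        congr 2
        field_simp
      refine ⟨hx, ?_⟩
      refine smul_cancel_aux hqp (a := θ * θ) (b := 0) ?_
      rw [add_smul, smul_zero, h3]
      abel
    · rintro ⟨hx, h0⟩
      rw [hx, h0]
      refine ⟨?_, ?_, by simp⟩
      · match_scalars <;> field_simp <;> ring
      · match_scalars <;> field_simp <;> try ring
  · simp only [funext_iff, Prod.forall, Fin.forall_fin_two]
    simp [Rhat, mulVec, dotProduct, Fintype.sum_prod_type, Fin.sum_univ_two,
      ← Algebra.smul_def]
    constructor
    · rintro ⟨⟨h1, h2⟩, h3⟩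
      have hφ : φ * φ = 0 := by
        refine smul_cancel_aux hqp (a := φ * φ) (b := 0) ?_
        rw [add_smul, smul_zero, ← h1]
        abel
      refine ⟨hφ, ?_⟩
      refine smul_cancel_aux cqp ?_
      rw [h3, smul_smul]
      congr 1
      field_simp
    · rintro ⟨hφ, hy⟩
      rw [hφ, hy]
      refine ⟨⟨by simp, ?_⟩, ?_⟩
      · match_scalars <;> field_simp <;> try ring
      · match_scalars <;> field_simp <;> try ring
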